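/- arXiv:0803.0178 — 5 statements merged into one kernel-verified Lean document; each statement's English description precedes it below -/
import Mathlib

section
/- Fix β ∈ (0, log 4), α > 0, b ∈ {1, 0, −1}, and k ∈ ℝ with k ≠ K'(β)·b. Define β_n = β + b/n^α and K_n = K(β) + k/n^α for n ∈ ℕ, n ≥ 1. Then as n → ∞, the scaled free-energy functionals n^{2α}·G_{β_n,K_n}(x/n^{α/2}) converge to the Ginzburg–Landau polynomial g(x) = β(K'(β)b − k)·x² + c₄(β)·x⁴ uniformly for x in every compact subset of ℝ; that is, for every compact C ⊆ ℝ, sup_{x∈C} |n^{2α}·G_{β_n,K_n}(x/n^{α/2}) − g(x)| → 0. -/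
open Real Filter

noncomputable def cgf (β t : ℝ) : ℝ :=
  Real.log ((1 + Real.exp (-β) * (Real.exp t + Real.exp (-t))) / (1 + 2 * Real.exp (-β)))

noncomputable def freeEnergyG (β K x : ℝ) : ℝ := β * K * x ^ 2 - cgf β (2 * β * K * x)

noncomputable def Kcurve (β : ℝ) : ℝ := (Real.exp β + 2) / (4 * β)

noncomputable def c4coef (β : ℝ) : ℝ := (Real.exp β + 2) ^ 2 * (4 - Real.exp β) / (8 * 24)

open Topology Function Set

/-!
Put `u = n^{-α/2}`, so that `β_n = β + b u²`, `K_n = K(β) + k u²` and the argument is `u x`.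
With `P = β_n K_n` and `A = 2 / (e^{β_n} + 2)` one has `c_{β_n}(2 P y) = log (1 + A (cosh (2 P y) - 1))`;
expanding `cosh` to fourth order and `log (1 + w)` to second order, with remainders that extend
continuously to `0`, gives `n^{2α} G_{β_n,K_n}(x / n^{α/2}) = H(u, x)` for a function `H` that is
jointly continuous on `ℝ × ℝ`. The `x²` coefficient of `H(u, x)` is `Q(u²)/u²` with `Q = P - 2 A P²`;
`Q(0) = 0` exactly because `β K(β) = (e^β + 2)/4`, so it tends to `Q'(0) = β (K'(β) b - k)`, while
the `x⁴` coefficient tends to `c₄(β)`. Joint continuity makes the convergence `H(u, ·) → H(0, ·)`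
uniform on compact sets.
-/

lemma tendstoUniformlyOn_of_continuous_uncurry {α β γ ι : Type*} [TopologicalSpace α]
    [TopologicalSpace β] [UniformSpace γ] {F : α → β → γ} (hF : Continuous ↿F) {C : Set β}
    (hC : IsCompact C) {a : α} {u : ι → α} {l : Filter ι} (hu : Tendsto u l (𝓝 a)) :
    TendstoUniformlyOn (fun n => F (u n)) (F a) l C := by
  intro V hV
  obtain ⟨v, hv, hvV⟩ :=
    hC.mem_uniformity_of_prod hF.continuousOn (mem_univ a) (symm_le_uniformity hV)
  rw [nhdsWithin_univ] at hv
  filter_upwards [hu hv] with n hn x hx using hvV _ hn x hx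

section RemovableSingularity

variable {g : ℝ → ℝ} {n : ℕ} {c : ℝ}

lemma pow_mul_update_div_pow (hn : n ≠ 0) (hg : g 0 = 0) (t : ℝ) :
    t ^ n * update (fun t => g t / t ^ n) 0 c t = g t := by
  rcases eq_or_ne t 0 with rfl | ht
  · simp [hg, hn]
  · rw [update_of_ne ht]
    field_simp

lemma continuousAt_update_div_pow_zero {M r : ℝ} (hr : 0 < r)
    (hg : ∀ t, |t| < r → |g t - c * t ^ n| ≤ M * |t| ^ (n + 1)) :
    ContinuousAt (update (fun t => g t / t ^ n) 0 c) 0 := by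
  refine continuousAt_of_locally_lipschitz hr M fun t ht => ?_
  rw [Real.dist_eq, sub_zero] at ht
  rcases eq_or_ne t 0 with rfl | ht0
  · simp
  · have htn : 0 < |t| ^ n := by positivity
    rw [update_of_ne ht0, update_self, Real.dist_eq, Real.dist_eq, sub_zero,
      div_sub' (pow_ne_zero n ht0), mul_comm (t ^ n) c, abs_div, abs_pow, div_le_iff₀ htn]
    calc |g t - c * t ^ n| ≤ M * |t| ^ (n + 1) := hg t ht
      _ = M * |t| * |t| ^ n := by ring

end RemovableSingularity

noncomputable def coshRem : ℝ → ℝ := update (fun t => (cosh t - 1 - t ^ 2 / 2) / t ^ 4) 0 (1 / 24)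

lemma coshRem_zero : coshRem 0 = 1 / 24 := update_self ..

lemma cosh_eq_coshRem (t : ℝ) : cosh t = 1 + t ^ 2 / 2 + t ^ 4 * coshRem t := by
  rw [coshRem, pow_mul_update_div_pow (by norm_num) (by simp)]
  ring

lemma abs_cosh_sub_taylor_le {t : ℝ} (ht : |t| ≤ 1) :
    |cosh t - 1 - t ^ 2 / 2 - 1 / 24 * t ^ 4| ≤ |t| ^ 6 := by
  have h₁ := abs_le.1 (Real.exp_bound ht (n := 6) (by norm_num))
  have h₂ := abs_le.1 (Real.exp_bound (x := -t) (by rwa [abs_neg]) (n := 6) (by norm_num))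
  norm_num [Finset.sum_range_succ, Nat.factorial, abs_neg] at h₁ h₂
  rw [Real.cosh_eq, abs_le]
  constructor <;> nlinarith [pow_abs t 6]

lemma continuous_coshRem : Continuous coshRem := by
  refine continuous_iff_continuousAt.2 fun t => ?_
  rcases eq_or_ne t 0 with rfl | ht
  · refine continuousAt_update_div_pow_zero (M := 1) one_pos fun t ht => ?_
    calc _ ≤ |t| ^ 6 := abs_cosh_sub_taylor_le ht.le
      _ ≤ 1 * |t| ^ (4 + 1) := by
        rw [one_mul]; exact pow_le_pow_of_le_one (abs_nonneg t) ht.le (by norm_num)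
  · refine (continuousAt_update_of_ne ht).2 (ContinuousAt.div ?_ (continuousAt_pow t 4)
      (pow_ne_zero 4 ht))
    fun_prop

noncomputable def logRem : ℝ → ℝ := update (fun w => (w - log (1 + w)) / w ^ 2) 0 (1 / 2)

lemma logRem_zero : logRem 0 = 1 / 2 := update_self ..

lemma log_one_add_eq_logRem (w : ℝ) : log (1 + w) = w - w ^ 2 * logRem w := by
  rw [logRem, pow_mul_update_div_pow (by norm_num) (by simp)]
  ring

lemma abs_log_one_add_taylor_le {w : ℝ} (hw : |w| ≤ 1 / 2) :
    |w - log (1 + w) - 1 / 2 * w ^ 2| ≤ 2 * |w| ^ 3 := by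
  have h := Real.abs_log_sub_add_sum_range_le (x := -w) (by rw [abs_neg]; linarith) 2
  norm_num [Finset.sum_range_succ] at h
  calc |w - log (1 + w) - 1 / 2 * w ^ 2| = |-w + w ^ 2 / 2 + log (1 + w)| := by
        rw [← abs_neg]; ring_nf
    _ ≤ |w| ^ 3 / (1 - |w|) := h
    _ ≤ 2 * |w| ^ 3 := by
        rw [div_le_iff₀ (by linarith)]
        nlinarith [pow_nonneg (abs_nonneg w) 3]

lemma continuousAt_logRem {w : ℝ} (hw : -1 < w) : ContinuousAt logRem w := by
  rcases eq_or_ne w 0 with rfl | hw0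
  · refine continuousAt_update_div_pow_zero (M := 2) (by norm_num : (0 : ℝ) < 1 / 2)
      fun v hv => abs_log_one_add_taylor_le hv.le
  · refine (continuousAt_update_of_ne hw0).2 (ContinuousAt.div ?_ (continuousAt_pow w 2)
      (pow_ne_zero 2 hw0))
    exact continuousAt_id.sub (ContinuousAt.log (f := fun v => 1 + v) (by fun_prop) (by linarith))

lemma cgf_eq_log_cosh (β t : ℝ) :
    cgf β t = log (1 + 2 / (exp β + 2) * (cosh t - 1)) := by
  rw [cgf, cosh_eq, exp_neg β]
  congr 1
  field_simp
  ring

lemma hasDerivAt_Kcurve {β : ℝ} (hβ : β ≠ 0) :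
    HasDerivAt Kcurve ((exp β * (4 * β) - (exp β + 2) * 4) / (4 * β) ^ 2) β := by
  have h : HasDerivAt (fun x : ℝ => 4 * x) 4 β := by
    simpa using (hasDerivAt_id β).const_mul 4
  exact ((hasDerivAt_exp β).add_const 2).div h (by simpa using hβ)

section Rescaling

variable (β b k : ℝ)

noncomputable def coupling (ε : ℝ) : ℝ := (β + b * ε) * (Kcurve β + k * ε)

noncomputable def weight (ε : ℝ) : ℝ := 2 / (exp (β + b * ε) + 2)

noncomputable def quadCoeff (ε : ℝ) : ℝ :=
  coupling β b k ε - 2 * weight β b ε * coupling β b k ε ^ 2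

noncomputable def logArg (u x : ℝ) : ℝ :=
  weight β b (u ^ 2) * (2 * coupling β b k (u ^ 2) * x) ^ 2 *
    (1 / 2 + (2 * coupling β b k (u ^ 2) * u * x) ^ 2 *
      coshRem (2 * coupling β b k (u ^ 2) * u * x))

noncomputable def rescaledG (u x : ℝ) : ℝ :=
  x ^ 2 * dslope (quadCoeff β b k) 0 (u ^ 2)
    - weight β b (u ^ 2) * (2 * coupling β b k (u ^ 2) * x) ^ 4 *
      coshRem (2 * coupling β b k (u ^ 2) * u * x)
    + logArg β b k u x ^ 2 * logRem (u ^ 2 * logArg β b k u x)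

lemma weight_pos (ε : ℝ) : 0 < weight β b ε := by
  unfold weight; positivity

lemma quadCoeff_zero : quadCoeff β b k 0 = 0 := by
  rcases eq_or_ne β 0 with rfl | hβ
  · simp [quadCoeff, coupling]
  · simp only [quadCoeff, coupling, weight, Kcurve, mul_zero, add_zero]
    field_simp
    ring

lemma sq_mul_logArg (u x : ℝ) :
    u ^ 2 * logArg β b k u x =
      weight β b (u ^ 2) * (cosh (2 * coupling β b k (u ^ 2) * u * x) - 1) := by
  rw [cosh_eq_coshRem, logArg]
  ring

lemma freeEnergyG_eq_rescaledG (u x : ℝ) :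
    freeEnergyG (β + b * u ^ 2) (Kcurve β + k * u ^ 2) (u * x) = u ^ 4 * rescaledG β b k u x := by
  have hQ := sub_smul_dslope (quadCoeff β b k) 0 (u ^ 2)
  rw [quadCoeff_zero, smul_eq_mul, sub_zero, sub_zero, quadCoeff] at hQ
  have hL := sq_mul_logArg β b k u x
  rw [cosh_eq_coshRem] at hL
  rw [freeEnergyG, cgf_eq_log_cosh, ← weight,
    show 2 * (β + b * u ^ 2) * (Kcurve β + k * u ^ 2) * (u * x)
      = 2 * coupling β b k (u ^ 2) * u * x by rw [coupling]; ring,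
    ← sq_mul_logArg, log_one_add_eq_logRem, rescaledG, ← coupling]
  linear_combination (-1 : ℝ) * hL - u ^ 2 * x ^ 2 * hQ

lemma hasDerivAt_quadCoeff {β : ℝ} (hβ : β ≠ 0) (b k : ℝ) :
    HasDerivAt (quadCoeff β b k) (β * (deriv Kcurve β * b - k)) 0 := by
  have hε : HasDerivAt (fun ε : ℝ => β + b * ε) b 0 := by
    simpa using ((hasDerivAt_id (0 : ℝ)).const_mul b).const_add β
  have hP : HasDerivAt (coupling β b k) (b * Kcurve β + β * k) 0 :=
    (hε.mul (((hasDerivAt_id (0 : ℝ)).const_mul k).const_add (Kcurve β))).congr_deriv (by simp)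
  have hA : HasDerivAt (weight β b) (-(2 * (exp β * b)) / (exp β + 2) ^ 2) 0 :=
    ((hasDerivAt_const (0 : ℝ) (2 : ℝ)).div (hε.exp.add_const 2)
      (by simp; positivity)).congr_deriv (by simp)
  refine (hP.sub ((hA.const_mul 2).mul (hP.pow 2))).congr_deriv ?_
  simp only [coupling, weight, (hasDerivAt_Kcurve hβ).deriv, Kcurve, Pi.pow_apply, mul_zero,
    add_zero]
  field_simp
  ring

lemma continuous_weight : Continuous (weight β b) := by
  unfold weight
  fun_prop (disch := intro; positivity)

lemma differentiable_quadCoeff : Differentiable ℝ (quadCoeff β b k) := by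
  unfold quadCoeff coupling weight
  fun_prop (disch := intro; positivity)

lemma continuous_rescaledG : Continuous ↿(rescaledG β b k) := by
  have hQ : Continuous (dslope (quadCoeff β b k) 0) :=
    continuousOn_univ.1 ((continuousOn_dslope univ_mem).2
      ⟨(differentiable_quadCoeff β b k).continuous.continuousOn, differentiable_quadCoeff β b k 0⟩)
  have hA := continuous_weight β b
  have hR := continuous_coshRem
  have hL : Continuous fun p : ℝ × ℝ => logArg β b k p.1 p.2 := by
    unfold logArg coupling
    fun_prop
  refine continuous_iff_continuousAt.2 fun p => ?_
  have hT : ContinuousAt (fun p : ℝ × ℝ => logRem (p.1 ^ 2 * logArg β b k p.1 p.2)) p := by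
    refine (continuousAt_logRem ?_).comp (by fun_prop : Continuous _).continuousAt
    rw [sq_mul_logArg]
    nlinarith [weight_pos β b (p.1 ^ 2), one_le_cosh (2 * coupling β b k (p.1 ^ 2) * p.1 * p.2)]
  show ContinuousAt (fun p : ℝ × ℝ => rescaledG β b k p.1 p.2) p
  unfold rescaledG coupling
  fun_prop

lemma rescaledG_zero {β : ℝ} (hβ : β ≠ 0) (b k : ℝ) :
    rescaledG β b k 0 = fun x => β * (deriv Kcurve β * b - k) * x ^ 2 + c4coef β * x ^ 4 := by
  funext x
  simp only [rescaledG, logArg, dslope_same, (hasDerivAt_quadCoeff hβ b k).deriv, ne_eq,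
    OfNat.ofNat_ne_zero, not_false_eq_true, zero_pow, mul_zero, zero_mul, coshRem_zero,
    logRem_zero, add_zero]
  simp only [weight, coupling, Kcurve, c4coef, mul_zero, add_zero]
  field_simp
  ring

lemma rescaledG_inv {v : ℝ} (hv : v ≠ 0) (x : ℝ) :
    rescaledG β b k v⁻¹ x = v ^ 4 * freeEnergyG (β + b / v ^ 2) (Kcurve β + k / v ^ 2) (x / v) := by
  have h := freeEnergyG_eq_rescaledG β b k v⁻¹ x
  rw [inv_pow, ← div_eq_mul_inv, ← div_eq_mul_inv, inv_mul_eq_div] at h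
  rw [h, inv_pow, mul_inv_cancel_left₀ (pow_ne_zero 4 hv)]

end Rescaling

theorem stmt0_general (β α b k : ℝ) (hβ0 : 0 < β) (hα : 0 < α) :
    ∀ C : Set ℝ, IsCompact C →
      TendstoUniformlyOn
        (fun (n : ℕ) (x : ℝ) =>
          (n : ℝ) ^ (2 * α) *
            freeEnergyG (β + b / (n : ℝ) ^ α) (Kcurve β + k / (n : ℝ) ^ α)
              (x / (n : ℝ) ^ (α / 2)))
        (fun x : ℝ => β * (deriv Kcurve β * b - k) * x ^ 2 + c4coef β * x ^ 4)
        atTop C := by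
  intro C hC
  have hv : Tendsto (fun n : ℕ => ((n : ℝ) ^ (α / 2))⁻¹) atTop (𝓝 0) :=
    ((tendsto_rpow_atTop (by positivity)).comp tendsto_natCast_atTop_atTop).inv_tendsto_atTop
  have h := tendstoUniformlyOn_of_continuous_uncurry (continuous_rescaledG β b k) hC hv
  rw [rescaledG_zero hβ0.ne'] at h
  refine h.congr ?_
  filter_upwards [eventually_gt_atTop 0] with n hn x _
  have hn' : (0 : ℝ) ≤ n := n.cast_nonneg
  have hsq : (n : ℝ) ^ α = ((n : ℝ) ^ (α / 2)) ^ 2 := by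
    rw [← rpow_mul_natCast hn']; norm_num
  have h4 : (n : ℝ) ^ (2 * α) = ((n : ℝ) ^ (α / 2)) ^ 4 := by
    rw [← rpow_mul_natCast hn']; ring_nf
  rw [hsq, h4]
  exact rescaledG_inv β b k (rpow_pos_of_pos (Nat.cast_pos.2 hn) _).ne' x

/-- uniform convergence of scaled free-energy functionals to the
Ginzburg--Landau polynomial near a second-order point, for the sequence
`β_n = β + b/n^α`, `K_n = K(β) + k/n^α`. -/
theorem stmt0 (β α b k : ℝ) (hβ0 : 0 < β) (hβ : β < Real.log 4) (hα : 0 < α)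
    (hb : b = 1 ∨ b = 0 ∨ b = -1) (hk : k ≠ deriv Kcurve β * b) :
    ∀ C : Set ℝ, IsCompact C →
      TendstoUniformlyOn
        (fun (n : ℕ) (x : ℝ) =>
          (n : ℝ) ^ (2 * α) *
            freeEnergyG (β + b / (n : ℝ) ^ α) (Kcurve β + k / (n : ℝ) ^ α)
              (x / (n : ℝ) ^ (α / 2)))
        (fun x : ℝ => β * (deriv Kcurve β * b - k) * x ^ 2 + c4coef β * x ^ 4)
        atTop C :=
  stmt0_general β α b k hβ0 hα
end

section
/- Fix α > 0, b ∈ {1, 0, −1}, and k ∈ ℝ with k ≠ K'(β_c)·b, where β_c = log 4. Define β_n = β_c + b/n^α and K_n = K(β_c) + k/n^α. Then as n → ∞, n^{3α/2}·G_{β_n,K_n}(x/n^{α/4}) converges to the Ginzburg–Landau polynomial g(x) = β_c(K'(β_c)b − k)·x² + c₆·x⁶ uniformly for x in every compact subset of ℝ, where c₆ = 9/40. -/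
open Real Filter

/-!
With `p = 2 / (e^β + 2)` one has `c_β(t) = log (1 + p (cosh t - 1))`. Expanding `cosh` to
order 6 and `log (1 + w)` to order 3 gives `G_{β,K}(y) = c₂ y² + c₄ y⁴ + c₆ y⁶ + O(y⁸)` with a
constant independent of `p ∈ [0, 1]`. Put `T = n^{α/4}`, so that `β_n = β_c + b / T⁴`,
`K_n = K(β_c) + k / T⁴` and `T⁶ G(x / T) = T⁴ c₂ x² + T² c₄ x⁴ + c₆ x⁶ + O(x⁸ / T²)`.
Since `2 β p K(β) = 1`, `c₂ = β K (K(β) - K) / K(β)`, so `T⁴ c₂` is a difference quotient of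
`K(·)` and tends to `β_c (K'(β_c) b - k)`. At `β_c = log 4` we have `p = 1/3`, where
`c₄ ∝ p - 1/3` vanishes; hence `c₄ = O(T⁻⁴)` and `T² c₄ → 0`, while `c₆ → 9/40`.
-/

open Topology

variable {ι : Type*} {l : Filter ι}

lemma tendstoUniformlyOn_of_dist_le {α β : Type*} [PseudoMetricSpace β]
    {F : ι → α → β} {f : α → β} {S : Set α} {ε : ι → ℝ} (hε : Tendsto ε l (𝓝 0))
    (h : ∀ᶠ i in l, ∀ x ∈ S, dist (f x) (F i x) ≤ ε i) : TendstoUniformlyOn F f l S := by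
  rw [Metric.tendstoUniformlyOn_iff]
  intro δ hδ
  filter_upwards [h, hε.eventually_lt_const hδ] with i hi hεi x hx
  exact (hi x hx).trans_lt hεi

lemma tendstoUniformlyOn_of_sextic_approx {F : ι → ℝ → ℝ}
    {A B C D : ι → ℝ} {a b c : ℝ} (hA : Tendsto A l (𝓝 a)) (hB : Tendsto B l (𝓝 b))
    (hC : Tendsto C l (𝓝 c)) (hD : Tendsto D l (𝓝 0))
    (hF : ∀ R, ∀ᶠ i in l, ∀ x, |x| ≤ R →
      |F i x - (A i * x ^ 2 + B i * x ^ 4 + C i * x ^ 6)| ≤ D i * x ^ 8)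
    {S : Set ℝ} (hS : Bornology.IsBounded S) :
    TendstoUniformlyOn F (fun x => a * x ^ 2 + b * x ^ 4 + c * x ^ 6) l S := by
  obtain ⟨R, hR⟩ := (Metric.isBounded_iff_subset_closedBall 0).mp hS
  have hxR : ∀ x ∈ S, |x| ≤ R := fun x hx => by simpa using hR hx
  refine tendstoUniformlyOn_of_dist_le (ε := fun i => |D i| * |R| ^ 8 + (|A i - a| * |R| ^ 2
    + |B i - b| * |R| ^ 4 + |C i - c| * |R| ^ 6)) ?_ ?_
  · have h := (hD.abs.mul_const (|R| ^ 8)).add ((((hA.sub_const a).abs.mul_const (|R| ^ 2)).add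
      ((hB.sub_const b).abs.mul_const (|R| ^ 4))).add ((hC.sub_const c).abs.mul_const (|R| ^ 6)))
    simpa using h
  filter_upwards [hF R] with i hi x hxS
  have hx : |x| ≤ |R| := (hxR x hxS).trans (le_abs_self R)
  have hFx : |F i x - (A i * x ^ 2 + B i * x ^ 4 + C i * x ^ 6)| ≤ |D i| * |x| ^ 8 := by
    simpa only [abs_mul, abs_pow] using (hi x (hxR x hxS)).trans (le_abs_self _)
  have hcoeff := abs_add_three ((A i - a) * x ^ 2) ((B i - b) * x ^ 4) ((C i - c) * x ^ 6)
  simp only [abs_mul, abs_pow] at hcoeff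
  rw [Real.dist_eq, abs_sub_comm]
  calc |F i x - (a * x ^ 2 + b * x ^ 4 + c * x ^ 6)|
      = |(F i x - (A i * x ^ 2 + B i * x ^ 4 + C i * x ^ 6))
          + ((A i - a) * x ^ 2 + (B i - b) * x ^ 4 + (C i - c) * x ^ 6)| := by ring_nf
    _ ≤ |D i| * |x| ^ 8 + (|A i - a| * |x| ^ 2 + |B i - b| * |x| ^ 4 + |C i - c| * |x| ^ 6) :=
        (abs_add_le _ _).trans (add_le_add hFx hcoeff)
    _ ≤ _ := by gcongr

lemma HasDerivAt.tendsto_mul_sub_div {f : ℝ → ℝ} {f' a : ℝ}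
    (hf : HasDerivAt f f' a) (b : ℝ) {N : ι → ℝ} (hN : Tendsto N l atTop) :
    Tendsto (fun i => N i * (f (a + b / N i) - f a)) l (𝓝 (f' * b)) := by
  have hline : HasDerivAt (fun s => f (a + b * s)) (f' * b) 0 := by
    have hf0 : HasDerivAt f f' (a + b * 0) := by simpa using hf
    exact hf0.comp 0 (((hasDerivAt_id 0).const_mul b).const_add a |>.congr_deriv (by simp))
  refine (hline.tendsto_slope_zero_right.comp (tendsto_inv_atTop_nhdsGT_zero.comp hN)).congr
    fun i => ?_
  simp [div_eq_mul_inv]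

noncomputable def logTaylor (w : ℝ) : ℝ := w - w ^ 2 / 2 + w ^ 3 / 3

noncomputable def coshTaylor (t : ℝ) : ℝ := t ^ 2 / 2 + t ^ 4 / 24 + t ^ 6 / 720

noncomputable def cgfTaylor (p t : ℝ) : ℝ :=
  p / 2 * t ^ 2 + (p / 24 - p ^ 2 / 8) * t ^ 4 + (p / 720 - p ^ 2 / 48 + p ^ 3 / 24) * t ^ 6

lemma abs_cosh_sub_one_sub_coshTaylor_le {t : ℝ} (ht : |t| ≤ 1) :
    |cosh t - 1 - coshTaylor t| ≤ t ^ 8 := by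
  have h₁ := Real.exp_bound ht (n := 8) (by norm_num)
  have h₂ := Real.exp_bound (x := -t) (by rwa [abs_neg]) (n := 8) (by norm_num)
  simp only [Finset.sum_range_succ, Finset.sum_range_zero, Nat.factorial, abs_neg,
    (by decide : Even 8).pow_abs] at h₁ h₂
  rw [cosh_eq, coshTaylor, abs_le] at *
  have h8 : 0 ≤ t ^ 8 := by positivity
  constructor <;> norm_num at h₁ h₂ <;> nlinarith [h₁.1, h₁.2, h₂.1, h₂.2]

lemma abs_log_one_add_sub_logTaylor_le {w : ℝ} (hw : |w| ≤ 1 / 2) :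
    |log (1 + w) - logTaylor w| ≤ 2 * w ^ 4 := by
  have h := Real.abs_log_sub_add_sum_range_le (x := -w) (by rw [abs_neg]; linarith) 3
  simp only [Finset.sum_range_succ, Finset.sum_range_zero, sub_neg_eq_add, abs_neg] at h
  have hw₁ : 0 < 1 - |w| := by linarith
  calc |log (1 + w) - logTaylor w| ≤ |w| ^ 4 / (1 - |w|) := by
        convert h using 2; simp only [logTaylor]; push_cast; ring
    _ ≤ 2 * w ^ 4 := by
        rw [div_le_iff₀ hw₁, (by decide : Even 4).pow_abs]
        nlinarith [pow_nonneg (abs_nonneg w) 4, (by decide : Even 4).pow_abs w]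

lemma abs_logTaylor_sub_logTaylor_le {w w' : ℝ} (hw₀ : 0 ≤ w) (hw₁ : w ≤ 1 / 2) (hw'₀ : 0 ≤ w')
    (hw'₁ : w' ≤ 1 / 2) : |logTaylor w - logTaylor w'| ≤ |w - w'| := by
  have hfac₀ : 0 ≤ 1 - (w + w') / 2 + (w ^ 2 + w * w' + w' ^ 2) / 3 := by
    nlinarith [sq_nonneg w, sq_nonneg w', mul_nonneg hw₀ hw'₀]
  have hfac₁ : 1 - (w + w') / 2 + (w ^ 2 + w * w' + w' ^ 2) / 3 ≤ 1 := by
    nlinarith [mul_le_mul_of_nonneg_left hw₁ hw₀, mul_le_mul_of_nonneg_left hw'₁ hw₀,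
      mul_le_mul_of_nonneg_left hw'₁ hw'₀]
  rw [show logTaylor w - logTaylor w'
      = (w - w') * (1 - (w + w') / 2 + (w ^ 2 + w * w' + w' ^ 2) / 3) by
        simp only [logTaylor]; ring,
    abs_mul, abs_of_nonneg hfac₀]
  exact mul_le_of_le_one_right (abs_nonneg _) hfac₁

lemma abs_logTaylor_mul_coshTaylor_sub_cgfTaylor_le {p t : ℝ} (hp₀ : 0 ≤ p) (hp₁ : p ≤ 1)
    (ht : |t| ≤ 1 / 2) : |logTaylor (p * coshTaylor t) - cgfTaylor p t| ≤ t ^ 8 := by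
  have hs₀ : 0 ≤ t ^ 2 := sq_nonneg t
  have hs₁ : t ^ 2 ≤ 1 / 4 := by nlinarith [sq_abs t, abs_nonneg t]
  have hcosh : coshTaylor t = t ^ 2 / 2 + (t ^ 2) ^ 2 / 24 + (t ^ 2) ^ 3 / 720 := by
    unfold coshTaylor; ring
  have hcgf : cgfTaylor p t = p / 2 * t ^ 2 + (p / 24 - p ^ 2 / 8) * (t ^ 2) ^ 2
      + (p / 720 - p ^ 2 / 48 + p ^ 3 / 24) * (t ^ 2) ^ 3 := by
    unfold cgfTaylor; ring
  rw [hcosh, hcgf, show t ^ 8 = (t ^ 2) ^ 4 by ring]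
  generalize t ^ 2 = s at hs₀ hs₁ ⊢
  set c := s / 2 + s ^ 2 / 24 + s ^ 3 / 720 with hc
  have hc₀ : 0 ≤ c := by positivity
  have hcs : c ≤ s := by nlinarith
  have hA₀ : 0 ≤ s ^ 4 * (1 / 576 + 1 / 720 + s / 8640 + s ^ 2 / 518400) := by positivity
  have hA₁ : s ^ 4 * (1 / 576 + 1 / 720 + s / 8640 + s ^ 2 / 518400) ≤ s ^ 4 :=
    mul_le_of_le_one_right (by positivity) (by nlinarith)
  have hB₀ : 0 ≤ s ^ 2 * (1 / 24 + s / 720) * (c ^ 2 + c * s / 2 + s ^ 2 / 4) := by positivity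
  have hB₁ : s ^ 2 * (1 / 24 + s / 720) * (c ^ 2 + c * s / 2 + s ^ 2 / 4) ≤ s ^ 4 := by
    have : c ^ 2 + c * s / 2 + s ^ 2 / 4 ≤ 2 * s ^ 2 := by
      nlinarith [mul_le_mul hcs hcs hc₀ hs₀, mul_le_mul_of_nonneg_right hcs hs₀]
    calc _ ≤ s ^ 2 * (1 / 2) * (2 * s ^ 2) := by gcongr; linarith
      _ = s ^ 4 := by ring
  rw [show logTaylor (p * c) - (p / 2 * s + (p / 24 - p ^ 2 / 8) * s ^ 2
        + (p / 720 - p ^ 2 / 48 + p ^ 3 / 24) * s ^ 3)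
      = -(p ^ 2 / 2) * (s ^ 4 * (1 / 576 + 1 / 720 + s / 8640 + s ^ 2 / 518400))
        + p ^ 3 / 3 * (s ^ 2 * (1 / 24 + s / 720) * (c ^ 2 + c * s / 2 + s ^ 2 / 4)) by
      simp only [logTaylor, hc]; ring, abs_le]
  have hp₂ : p ^ 2 ≤ 1 := pow_le_one₀ hp₀ hp₁
  have hp₃ : p ^ 3 ≤ 1 := pow_le_one₀ hp₀ hp₁
  constructor <;> nlinarith [mul_nonneg (pow_nonneg hp₀ 2) hA₀,
    mul_nonneg (pow_nonneg hp₀ 3) hB₀, mul_le_mul hp₂ hA₁ hA₀ zero_le_one,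
    mul_le_mul hp₃ hB₁ hB₀ zero_le_one]

lemma abs_log_one_add_mul_cosh_sub_one_sub_cgfTaylor_le {p t : ℝ} (hp₀ : 0 ≤ p) (hp₁ : p ≤ 1)
    (ht : |t| ≤ 1 / 2) :
    |log (1 + p * (cosh t - 1)) - cgfTaylor p t| ≤ 40 * t ^ 8 := by
  have ht₂ : t ^ 2 ≤ 1 / 4 := by nlinarith [sq_abs t, abs_nonneg t]
  have ht₈ : 0 ≤ t ^ 8 := by positivity
  have hcosh := abs_cosh_sub_one_sub_coshTaylor_le (ht.trans (by norm_num))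
  have hc₀ : 0 ≤ coshTaylor t := by unfold coshTaylor; positivity
  have hc₁ : coshTaylor t ≤ t ^ 2 := by
    have h₄ : t ^ 4 ≤ t ^ 2 := by nlinarith [sq_nonneg t]
    have h₆ : t ^ 6 ≤ t ^ 2 := by nlinarith [sq_nonneg t]
    unfold coshTaylor; linarith [sq_nonneg t]
  have hw₀ : 0 ≤ p * (cosh t - 1) := mul_nonneg hp₀ (by linarith [one_le_cosh t])
  have hw₁ : p * (cosh t - 1) ≤ 2 * t ^ 2 := by
    have h₈ : t ^ 8 ≤ t ^ 2 := by
      rw [show t ^ 8 = (t ^ 2) ^ 4 by ring]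
      exact pow_le_of_le_one (sq_nonneg t) (by linarith) (by norm_num)
    have : cosh t - 1 ≤ 2 * t ^ 2 := by linarith [(abs_le.mp hcosh).2]
    nlinarith
  have hw₀' : 0 ≤ p * coshTaylor t := mul_nonneg hp₀ hc₀
  have hw₁' : p * coshTaylor t ≤ t ^ 2 := by nlinarith
  have hlog : |log (1 + p * (cosh t - 1)) - logTaylor (p * (cosh t - 1))| ≤ 32 * t ^ 8 := by
    refine (abs_log_one_add_sub_logTaylor_le (by rw [abs_of_nonneg hw₀]; linarith)).trans ?_
    have : (p * (cosh t - 1)) ^ 4 ≤ (2 * t ^ 2) ^ 4 := pow_le_pow_left₀ hw₀ hw₁ 4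
    nlinarith
  have hcubic : |logTaylor (p * (cosh t - 1)) - logTaylor (p * coshTaylor t)| ≤ t ^ 8 := by
    refine (abs_logTaylor_sub_logTaylor_le hw₀ (by linarith) hw₀' (by linarith)).trans ?_
    rw [← mul_sub, abs_mul, abs_of_nonneg hp₀]
    nlinarith [abs_nonneg (cosh t - 1 - coshTaylor t)]
  have hpoly := abs_logTaylor_mul_coshTaylor_sub_cgfTaylor_le hp₀ hp₁ ht
  have h₁ := abs_sub_le (log (1 + p * (cosh t - 1))) (logTaylor (p * (cosh t - 1)))
    (cgfTaylor p t)
  have h₂ := abs_sub_le (logTaylor (p * (cosh t - 1))) (logTaylor (p * coshTaylor t))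
    (cgfTaylor p t)
  linarith

-- the probability of a nonzero spin under the single-site weights `1, e^{-β}, e^{-β}` of `0, ±1`
noncomputable def nonzeroProb (β : ℝ) : ℝ := 2 / (exp β + 2)

lemma nonzeroProb_nonneg (β : ℝ) : 0 ≤ nonzeroProb β := by unfold nonzeroProb; positivity

lemma nonzeroProb_le_one (β : ℝ) : nonzeroProb β ≤ 1 := by
  rw [nonzeroProb, div_le_one (by positivity)]; linarith [exp_pos β]

lemma nonzeroProb_log_four : nonzeroProb (log 4) = 1 / 3 := by
  rw [nonzeroProb, exp_log (by norm_num)]; norm_num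

lemma differentiable_nonzeroProb : Differentiable ℝ nonzeroProb := by
  intro β
  have : exp β + 2 ≠ 0 := by positivity
  unfold nonzeroProb
  fun_prop (disch := assumption)

lemma Kcurve_log_four : Kcurve (log 4) = 3 / (2 * log 4) := by
  rw [Kcurve, exp_log (by norm_num)]; field_simp; norm_num

lemma two_mul_mul_nonzeroProb_mul_Kcurve {β : ℝ} (hβ : β ≠ 0) :
    2 * β * nonzeroProb β * Kcurve β = 1 := by
  have : exp β + 2 ≠ 0 := by positivity
  rw [nonzeroProb, Kcurve]; field_simp; ring

lemma differentiableAt_Kcurve {β : ℝ} (hβ : β ≠ 0) : DifferentiableAt ℝ Kcurve β := by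
  have : 4 * β ≠ 0 := mul_ne_zero four_ne_zero hβ
  unfold Kcurve
  fun_prop (disch := assumption)

lemma cgf_eq_log_one_add (β t : ℝ) : cgf β t = log (1 + nonzeroProb β * (cosh t - 1)) := by
  have : exp β + 2 ≠ 0 := by positivity
  rw [cgf, nonzeroProb, cosh_eq, exp_neg β]
  congr 1
  field_simp
  ring

lemma abs_cgf_sub_cgfTaylor_le (β : ℝ) {t : ℝ} (ht : |t| ≤ 1 / 2) :
    |cgf β t - cgfTaylor (nonzeroProb β) t| ≤ 40 * t ^ 8 := by
  rw [cgf_eq_log_one_add]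
  exact abs_log_one_add_mul_cosh_sub_one_sub_cgfTaylor_le (nonzeroProb_nonneg β)
    (nonzeroProb_le_one β) ht

-- the coefficients of `β K y² - cgfTaylor (nonzeroProb β) (2 β K y)`, the Taylor polynomial of
-- order 6 of `freeEnergyG β K` at `0`
noncomputable def glCoeff₂ (β K : ℝ) : ℝ := β * K - nonzeroProb β / 2 * (2 * β * K) ^ 2

noncomputable def glCoeff₄ (β K : ℝ) : ℝ :=
  -(nonzeroProb β / 24 - nonzeroProb β ^ 2 / 8) * (2 * β * K) ^ 4

noncomputable def glCoeff₆ (β K : ℝ) : ℝ :=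
  -(nonzeroProb β / 720 - nonzeroProb β ^ 2 / 48 + nonzeroProb β ^ 3 / 24) * (2 * β * K) ^ 6

lemma abs_rescaled_freeEnergyG_sub_le {β K T x : ℝ} (hT : 0 < T)
    (hx : |2 * β * K * x| ≤ T / 2) :
    |T ^ 6 * freeEnergyG β K (x / T)
        - (T ^ 4 * glCoeff₂ β K * x ^ 2 + T ^ 2 * glCoeff₄ β K * x ^ 4 + glCoeff₆ β K * x ^ 6)|
      ≤ 40 * (2 * β * K) ^ 8 / T ^ 2 * x ^ 8 := by
  have ht : |2 * β * K * (x / T)| ≤ 1 / 2 := by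
    rw [← mul_div_assoc, abs_div, abs_of_pos hT, div_le_iff₀ hT]; linarith
  have h := abs_cgf_sub_cgfTaylor_le β ht
  rw [show T ^ 6 * freeEnergyG β K (x / T)
      - (T ^ 4 * glCoeff₂ β K * x ^ 2 + T ^ 2 * glCoeff₄ β K * x ^ 4 + glCoeff₆ β K * x ^ 6)
      = -(T ^ 6 * (cgf β (2 * β * K * (x / T))
          - cgfTaylor (nonzeroProb β) (2 * β * K * (x / T)))) by
    simp only [freeEnergyG, glCoeff₂, glCoeff₄, glCoeff₆, cgfTaylor]; field_simp; ring,
    abs_neg, abs_mul, abs_of_pos (by positivity : 0 < T ^ 6)]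
  calc T ^ 6 * |cgf β (2 * β * K * (x / T)) - cgfTaylor (nonzeroProb β) (2 * β * K * (x / T))|
      ≤ T ^ 6 * (40 * (2 * β * K * (x / T)) ^ 8) := by gcongr
    _ = 40 * (2 * β * K) ^ 8 / T ^ 2 * x ^ 8 := by field_simp

lemma glCoeff₂_eq {β : ℝ} (hβ : β ≠ 0) (K : ℝ) :
    glCoeff₂ β K = β * K / Kcurve β * (Kcurve β - K) := by
  have h := two_mul_mul_nonzeroProb_mul_Kcurve hβ
  have hK : Kcurve β ≠ 0 := by rintro h0; simp [h0] at h
  rw [glCoeff₂, eq_comm, div_mul_eq_mul_div, div_eq_iff hK]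
  linear_combination (β * K * K) * h

lemma glCoeff₄_eq (β K : ℝ) :
    glCoeff₄ β K = (2 * β * K) ^ 4 * nonzeroProb β / 8 * (nonzeroProb β - 1 / 3) := by
  rw [glCoeff₄]; ring

lemma glCoeff₆_log_four : glCoeff₆ (log 4) (Kcurve (log 4)) = 9 / 40 := by
  have : log 4 ≠ 0 := by positivity
  rw [glCoeff₆, nonzeroProb_log_four, Kcurve_log_four]
  field_simp
  norm_num

lemma continuous_glCoeff₆ : Continuous fun q : ℝ × ℝ => glCoeff₆ q.1 q.2 := by
  unfold glCoeff₆
  have := differentiable_nonzeroProb.continuous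
  fun_prop

lemma tendsto_add_div_pow_four {T : ι → ℝ} (hT : Tendsto T l atTop)
    (a b : ℝ) : Tendsto (fun i => a + b / T i ^ 4) l (𝓝 a) := by
  simpa using
    (tendsto_const_nhds.div_atTop ((tendsto_pow_atTop (by norm_num)).comp hT)).const_add a

lemma tendsto_pow_four_mul_glCoeff₂ {T : ι → ℝ}
    (hT : Tendsto T l atTop) (b k : ℝ) :
    Tendsto (fun i => T i ^ 4 * glCoeff₂ (log 4 + b / T i ^ 4) (Kcurve (log 4) + k / T i ^ 4)) l
      (𝓝 (log 4 * (deriv Kcurve (log 4) * b - k))) := by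
  have hN : Tendsto (fun i => T i ^ 4) l atTop := (tendsto_pow_atTop (by norm_num)).comp hT
  have hβ := tendsto_add_div_pow_four hT (log 4) b
  have hK := tendsto_add_div_pow_four hT (Kcurve (log 4)) k
  have hKc : Kcurve (log 4) ≠ 0 := by rw [Kcurve_log_four]; positivity
  have hKd := (differentiableAt_Kcurve (by positivity : log 4 ≠ 0)).hasDerivAt
  have hratio : Tendsto (fun i => (log 4 + b / T i ^ 4) * (Kcurve (log 4) + k / T i ^ 4)
      / Kcurve (log 4 + b / T i ^ 4)) l (𝓝 (log 4)) := by
    have h := (hβ.mul hK).div (hKd.continuousAt.tendsto.comp hβ) hKc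
    rwa [mul_div_assoc, div_self hKc, mul_one] at h
  have hslope := hKd.tendsto_mul_sub_div b hN
  refine ((hratio.mul (hslope.sub_const k)).congr' ?_)
  filter_upwards [hβ.eventually_ne (by positivity : log 4 ≠ 0), hT.eventually_ne_atTop 0]
    with i hβi hTi
  rw [glCoeff₂_eq hβi]
  generalize (log 4 + b / T i ^ 4) * (Kcurve (log 4) + k / T i ^ 4)
    / Kcurve (log 4 + b / T i ^ 4) = r
  field_simp
  ring

lemma tendsto_sq_mul_glCoeff₄ {T : ι → ℝ}
    (hT : Tendsto T l atTop) (b : ℝ) {K : ι → ℝ} (hK : Tendsto K l (𝓝 (Kcurve (log 4)))) :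
    Tendsto (fun i => T i ^ 2 * glCoeff₄ (log 4 + b / T i ^ 4) (K i)) l (𝓝 0) := by
  have hN : Tendsto (fun i => T i ^ 4) l atTop := (tendsto_pow_atTop (by norm_num)).comp hT
  have hβ := tendsto_add_div_pow_four hT (log 4) b
  have hp := (differentiable_nonzeroProb.continuous.tendsto _).comp hβ
  have hslope := (differentiable_nonzeroProb (log 4)).hasDerivAt.tendsto_mul_sub_div b hN
  have hinv := tendsto_inv_atTop_zero.comp ((tendsto_pow_atTop (by norm_num : 2 ≠ 0)).comp hT)
  have h := (((((hβ.const_mul 2).mul hK).pow 4).mul hp).div_const 8).mul hslope |>.mul hinv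
  rw [mul_zero] at h
  refine h.congr' ?_
  filter_upwards [hT.eventually_ne_atTop 0] with i hTi
  simp only [Function.comp_apply, glCoeff₄_eq, nonzeroProb_log_four]
  field_simp

theorem tendstoUniformlyOn_rescaled_freeEnergyG {T : ι → ℝ}
    (hT : Tendsto T l atTop) (b k : ℝ) {S : Set ℝ} (hS : Bornology.IsBounded S) :
    TendstoUniformlyOn
      (fun i x => T i ^ 6 *
        freeEnergyG (log 4 + b / T i ^ 4) (Kcurve (log 4) + k / T i ^ 4) (x / T i))
      (fun x => log 4 * (deriv Kcurve (log 4) * b - k) * x ^ 2 + 9 / 40 * x ^ 6) l S := by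
  have hβ := tendsto_add_div_pow_four hT (log 4) b
  have hK := tendsto_add_div_pow_four hT (Kcurve (log 4)) k
  have hu := (hβ.const_mul 2).mul hK
  have h₆ := (continuous_glCoeff₆.tendsto _).comp (hβ.prodMk_nhds hK)
  rw [glCoeff₆_log_four] at h₆
  have hD := ((hu.pow 8).const_mul 40).div_atTop
    ((tendsto_pow_atTop (by norm_num : 2 ≠ 0)).comp hT)
  refine (tendstoUniformlyOn_of_sextic_approx (tendsto_pow_four_mul_glCoeff₂ hT b k)
    (tendsto_sq_mul_glCoeff₄ hT b hK) h₆ hD (fun R => ?_) hS).congr_right fun x _ => by ring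
  filter_upwards [hT.eventually_gt_atTop 0,
    ((hu.abs.mul_const R).div_atTop hT).eventually_lt_const (by norm_num : (0 : ℝ) < 1 / 2)]
    with i hTi hsmall x hx
  refine abs_rescaled_freeEnergyG_sub_le hTi ?_
  rw [div_lt_iff₀ hTi] at hsmall
  rw [abs_mul]
  nlinarith [mul_le_mul_of_nonneg_left hx
    (abs_nonneg (2 * (log 4 + b / T i ^ 4) * (Kcurve (log 4) + k / T i ^ 4)))]

theorem stmt4_general (α b k : ℝ) (hα : 0 < α) :
    ∀ C : Set ℝ, IsCompact C →
      TendstoUniformlyOn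
        (fun (n : ℕ) (x : ℝ) =>
          (n : ℝ) ^ (3 * α / 2) *
            freeEnergyG (Real.log 4 + b / (n : ℝ) ^ α)
              (Kcurve (Real.log 4) + k / (n : ℝ) ^ α)
              (x / (n : ℝ) ^ (α / 4)))
        (fun x : ℝ =>
          Real.log 4 * (deriv Kcurve (Real.log 4) * b - k) * x ^ 2 + (9 / 40) * x ^ 6)
        atTop C := by
  intro C hC
  have hT : Tendsto (fun n : ℕ => (n : ℝ) ^ (α / 4)) atTop atTop :=
    (tendsto_rpow_atTop (by positivity)).comp tendsto_natCast_atTop_atTop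
  have hpow (n m : ℕ) : ((n : ℝ) ^ (α / 4)) ^ m = (n : ℝ) ^ (α / 4 * m) := by
    rw [← rpow_natCast, ← rpow_mul (Nat.cast_nonneg n)]
  convert tendstoUniformlyOn_rescaled_freeEnergyG hT b k hC.isBounded using 4 with n x <;>
    simp only [hpow, Nat.cast_ofNat] <;> ring_nf

/-- uniform convergence of scaled free-energy functionals to the
degree-6 Ginzburg--Landau polynomial for a sequence converging to the
tricritical point along a ray. -/
theorem stmt4 (α b k : ℝ) (hα : 0 < α) (hb : b = 1 ∨ b = 0 ∨ b = -1)
    (hk : k ≠ deriv Kcurve (Real.log 4) * b) :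
    ∀ C : Set ℝ, IsCompact C →
      TendstoUniformlyOn
        (fun (n : ℕ) (x : ℝ) =>
          (n : ℝ) ^ (3 * α / 2) *
            freeEnergyG (Real.log 4 + b / (n : ℝ) ^ α)
              (Kcurve (Real.log 4) + k / (n : ℝ) ^ α)
              (x / (n : ℝ) ^ (α / 4)))
        (fun x : ℝ =>
          Real.log 4 * (deriv Kcurve (Real.log 4) * b - k) * x ^ 2 + (9 / 40) * x ^ 6)
        atTop C :=
  stmt4_general α b k hα
end

section
/- Let β_c = log 4, c₄ = 3/16, c₆ = 9/40, and for ℓ ∈ ℝ let g(x) = (1/2)·β_c(K''(β_c) − ℓ)·x² + 4c₄·x⁴ + c₆·x⁶. Then g has a nonzero global minimum point if and only if ℓ > K''(β_c); and if ℓ > K''(β_c), then the set of global minimum points of g over ℝ is exactly {x̄, −x̄}, where x̄ = (√10/3)·(−1 + (1 + (3β_c/5)(ℓ − K''(β_c)))^{1/2})^{1/2}. -/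
open Real Filter

/-!
Only the sign of the quadratic coefficient `a = ½ β_c (K''(β_c) − ℓ)` of
`g(x) = a x² + b x⁴ + c x⁶` (with `b > 0`, `c ≥ 0`) matters. If `a ≥ 0`, every term is
nonnegative and `g x > g 0` for `x ≠ 0`. If `a < 0`, then `t = x̄²` is the positive root of
`a + 2 b t + 3 c t² = 0`, and `g x − g x̄ = (x² − x̄²)² (c x² + 2 c x̄² + b)`, which vanishes
exactly at `x = ±x̄`.
-/

section EvenSextic

variable {g : ℝ → ℝ} {a b c : ℝ}

theorem evenSextic_sub_eq (hg : ∀ x, g x = a * x ^ 2 + b * x ^ 4 + c * x ^ 6) {s : ℝ}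
    (hs : a + 2 * b * s ^ 2 + 3 * c * s ^ 4 = 0) (x : ℝ) :
    g x - g s = (x ^ 2 - s ^ 2) ^ 2 * (c * x ^ 2 + 2 * c * s ^ 2 + b) := by
  rw [hg, hg]
  linear_combination (x ^ 2 - s ^ 2) * hs

theorem evenSextic_eq_zero_of_isMin (hg : ∀ x, g x = a * x ^ 2 + b * x ^ 4 + c * x ^ 6)
    (ha : 0 ≤ a) (hb : 0 < b) (hc : 0 ≤ c) {x : ℝ} (hx : ∀ y, g x ≤ g y) : x = 0 := by
  by_contra hx0
  have h0 := hx 0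
  rw [hg, hg] at h0
  have : 0 < b * x ^ 4 := by positivity
  nlinarith [mul_nonneg ha (sq_nonneg x), (by positivity : 0 ≤ c * x ^ 6)]

theorem evenSextic_setOf_isMin_eq_pair (hg : ∀ x, g x = a * x ^ 2 + b * x ^ 4 + c * x ^ 6)
    (hb : 0 < b) (hc : 0 ≤ c) {s : ℝ} (hs : a + 2 * b * s ^ 2 + 3 * c * s ^ 4 = 0) :
    {x | ∀ y, g x ≤ g y} = {s, -s} := by
  have hpos : ∀ x, 0 < c * x ^ 2 + 2 * c * s ^ 2 + b := fun x => by positivity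
  have hmin : ∀ y, g s ≤ g y := fun y => by
    have := evenSextic_sub_eq hg hs y
    nlinarith [mul_nonneg (sq_nonneg (y ^ 2 - s ^ 2)) (hpos y).le]
  ext x
  rw [Set.mem_ofPred_eq, Set.mem_insert_iff, Set.mem_singleton_iff,
    ← sq_eq_sq_iff_eq_or_eq_neg]
  constructor
  · intro hx
    have hdiff := evenSextic_sub_eq hg hs x
    have hsq : (x ^ 2 - s ^ 2) ^ 2 = 0 := by
      nlinarith [hx s, mul_nonneg (sq_nonneg (x ^ 2 - s ^ 2)) (hpos x).le, hpos x]
    exact sub_eq_zero.mp (pow_eq_zero_iff two_ne_zero |>.mp hsq)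
  · intro hx y
    have hdiff := evenSextic_sub_eq hg hs x
    rw [hx, sub_self, zero_pow two_ne_zero, zero_mul, sub_eq_zero] at hdiff
    exact hdiff ▸ hmin y

end EvenSextic

theorem sqrt_formula_pos_and_critical {e : ℝ} (he : 0 < e) :
    0 < √10 / 3 * √(-1 + √(1 + e)) ∧
      -(5 / 6 * e) + 2 * (4 * (3 / 16)) * (√10 / 3 * √(-1 + √(1 + e))) ^ 2 +
        3 * (9 / 40) * (√10 / 3 * √(-1 + √(1 + e))) ^ 4 = 0 := by
  set x := √10 / 3 * √(-1 + √(1 + e))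
  have hS : √(1 + e) ^ 2 = 1 + e := sq_sqrt (by linarith)
  have hS1 : 1 < √(1 + e) := by
    rw [lt_sqrt zero_le_one]; linarith
  have hx2 : x ^ 2 = 10 / 9 * (-1 + √(1 + e)) := by
    rw [mul_pow, div_pow, sq_sqrt (by norm_num), sq_sqrt (by linarith)]
    ring
  refine ⟨mul_pos (by positivity) (sqrt_pos.mpr (by linarith)), ?_⟩
  rw [show x ^ 4 = (x ^ 2) ^ 2 by ring, hx2]
  linear_combination (5 / 6) * hS

/-- global minimum points of
`g(x) = (1/2)β_c(K''(β_c) − ℓ)x² + 4c₄x⁴ + c₆x⁶`. -/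
theorem stmt9 (ℓ : ℝ) (g : ℝ → ℝ)
    (hg : ∀ x : ℝ, g x =
      (1 / 2) * Real.log 4 * (iteratedDeriv 2 Kcurve (Real.log 4) - ℓ) * x ^ 2 +
        4 * (3 / 16) * x ^ 4 + (9 / 40) * x ^ 6) :
    ((∃ x : ℝ, x ≠ 0 ∧ ∀ y : ℝ, g x ≤ g y) ↔ iteratedDeriv 2 Kcurve (Real.log 4) < ℓ) ∧
    (iteratedDeriv 2 Kcurve (Real.log 4) < ℓ →
      {x : ℝ | ∀ y : ℝ, g x ≤ g y} =
        {Real.sqrt 10 / 3 *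
            Real.sqrt (-1 + Real.sqrt (1 +
              3 * Real.log 4 / 5 * (ℓ - iteratedDeriv 2 Kcurve (Real.log 4)))),
         -(Real.sqrt 10 / 3 *
            Real.sqrt (-1 + Real.sqrt (1 +
              3 * Real.log 4 / 5 * (ℓ - iteratedDeriv 2 Kcurve (Real.log 4)))))}) := by
  have hL : 0 < Real.log 4 := Real.log_pos (by norm_num)
  set K2 := iteratedDeriv 2 Kcurve (Real.log 4)
  set xb := √10 / 3 * √(-1 + √(1 + 3 * Real.log 4 / 5 * (ℓ - K2)))
  have hminimizers (hℓ : K2 < ℓ) : 0 < xb ∧ {x : ℝ | ∀ y, g x ≤ g y} = {xb, -xb} := by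
    obtain ⟨hpos, hcrit⟩ :=
      sqrt_formula_pos_and_critical (by positivity : 0 < 3 * Real.log 4 / 5 * (ℓ - K2))
    exact ⟨hpos, evenSextic_setOf_isMin_eq_pair hg (by norm_num) (by norm_num)
      (by linear_combination hcrit)⟩
  refine ⟨⟨fun ⟨x, hx0, hx⟩ => ?_, fun hℓ => ?_⟩, fun hℓ => (hminimizers hℓ).2⟩
  · by_contra hℓ
    have ha : 0 ≤ 1 / 2 * Real.log 4 * (K2 - ℓ) := mul_nonneg (by positivity) (by linarith)
    exact hx0 (evenSextic_eq_zero_of_isMin hg ha (by norm_num) (by norm_num) hx)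
  · obtain ⟨hpos, hset⟩ := hminimizers hℓ
    exact ⟨xb, hpos.ne', show xb ∈ {x | ∀ y, g x ≤ g y} from hset ▸ Set.mem_insert _ _⟩
end

section
/- Fix β with 0 < β ≤ β_c = log 4, and for K > 0 let M_{β,K} denote the set of global minimum points of G_{β,K} over ℝ, i.e., M_{β,K} = {x ∈ ℝ : G_{β,K}(x) ≤ G_{β,K}(y) for all y ∈ ℝ}. Then: (a) for every K with 0 < K ≤ K(β), M_{β,K} = {0}; (b) for every K > K(β) there exists m(β,K) > 0 such that M_{β,K} = {m(β,K), −m(β,K)}; (c) the function K ↦ m(β,K) is positive, increasing, and continuous on (K(β), ∞), and m(β,K) → 0 as K → K(β) from the right. In particular, M_{β,K} exhibits a continuous bifurcation at K = K(β). -/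
/-!
With `c = c_β`, `G'(x) = 2βK (x - c'(2βKx))` where `c'(t) = 2 sinh t / (e^β + 2 cosh t)`.
Its derivative `c''(t) = (2e^β cosh t + 4) / (e^β + 2 cosh t)²` is a decreasing function of
`cosh t` as long as `e^β ≤ 4`, so `c'` is strictly concave on `[0, ∞)` and `c'(t)/t` decreases
strictly from `c''(0) = 2/(e^β + 2)`. Hence the mean-field equation `x = c'(2βKx)` has no
positive root when `4βK ≤ e^β + 2`, i.e. `K ≤ K(β)`, and exactly one root `m(β,K)` otherwise,
with `x < c'(2βKx)` below it and `x > c'(2βKx)` above it. So the even function `G` decreases on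
`[0, m]` and increases on `[m, ∞)`. Since these strict inequalities at a fixed `x` are open
conditions in `K`, the root depends monotonically and continuously on `K` and tends to `0` at
`K(β)`.
-/

open Real Filter

open Set

lemma setOf_forall_le_eq_pair_of_even {f : ℝ → ℝ} {m : ℝ} (heven : ∀ x, f (-x) = f x)
    (hmin : ∀ x, 0 ≤ x → x ≠ m → f m < f x) : {x | ∀ y, f x ≤ f y} = {m, -m} := by
  have hlt : ∀ x, x ≠ m → x ≠ -m → f m < f x := fun x hxm hxm' => by
    have habs : f |x| = f x := by rcases abs_choice x with h | h <;> simp only [h, heven]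
    rw [← habs]
    exact hmin |x| (abs_nonneg x) fun h => (eq_or_eq_neg_of_abs_eq h).elim hxm hxm'
  have hle : ∀ y, f m ≤ f y := fun y => by
    by_cases hym : y = m; · rw [hym]
    by_cases hym' : y = -m; · rw [hym', heven]
    exact (hlt y hym hym').le
  ext x
  refine ⟨fun hx => ?_, ?_⟩
  · by_contra h
    simp only [mem_insert_iff, mem_singleton_iff, not_or] at h
    exact (hx m).not_gt (hlt x h.1 h.2)
  · rintro (rfl | rfl)
    · exact hle
    · intro y
      rw [heven]
      exact hle y

lemma lt_of_hasDerivAt_neg_of_pos {f f' : ℝ → ℝ} {m x : ℝ} (hf : ∀ x, HasDerivAt f (f' x) x)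
    (hneg : ∀ x, 0 < x → x < m → f' x < 0) (hpos : ∀ x, m < x → 0 < f' x)
    (hx : 0 ≤ x) (hxm : x ≠ m) : f m < f x := by
  have hcont : Continuous f := continuous_iff_continuousAt.2 fun x => (hf x).continuousAt
  rcases hxm.lt_or_gt with h | h
  · have hanti : StrictAntiOn f (Icc 0 m) :=
      strictAntiOn_of_hasDerivWithinAt_neg (convex_Icc 0 m) hcont.continuousOn
        (fun x _ => (hf x).hasDerivWithinAt) fun x hx => by
          rw [interior_Icc] at hx; exact hneg x hx.1 hx.2
    exact hanti ⟨hx, h.le⟩ ⟨hx.trans h.le, le_rfl⟩ h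
  · have hmono : StrictMonoOn f (Ici m) :=
      strictMonoOn_of_hasDerivWithinAt_pos (convex_Ici m) hcont.continuousOn
        (fun x _ => (hf x).hasDerivWithinAt) fun x hx => by
          rw [interior_Ici] at hx; exact hpos x hx
    exact hmono self_mem_Ici h.le h

namespace BlumeCapel

open Topology

noncomputable def cgfDeriv (β t : ℝ) : ℝ := 2 * sinh t / (exp β + 2 * cosh t)

noncomputable def cgfDeriv2 (β t : ℝ) : ℝ := (2 * exp β * cosh t + 4) / (exp β + 2 * cosh t) ^ 2

lemma exp_add_two_mul_cosh_pos (β t : ℝ) : 0 < exp β + 2 * cosh t := by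
  have := cosh_pos t
  positivity

lemma cgf_eq_log_sub_log (β t : ℝ) :
    cgf β t = log (exp β + 2 * cosh t) - log (exp β + 2) := by
  have hβ : exp (-β) * exp β = 1 := by rw [← exp_add]; simp
  have hnum : 1 + exp (-β) * (exp t + exp (-t)) = exp (-β) * (exp β + 2 * cosh t) := by
    rw [cosh_eq]; linear_combination -hβ
  have hden : 1 + 2 * exp (-β) = exp (-β) * (exp β + 2) := by linear_combination -hβ
  rw [cgf, hnum, hden, mul_div_mul_left _ _ (exp_pos _).ne',
    log_div (exp_add_two_mul_cosh_pos β t).ne' (by positivity)]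

lemma hasDerivAt_cgf (β t : ℝ) : HasDerivAt (cgf β) (cgfDeriv β t) t := by
  have h := ((((hasDerivAt_cosh t).const_mul 2).const_add (exp β)).log
    (exp_add_two_mul_cosh_pos β t).ne').sub_const (log (exp β + 2))
  rw [funext (cgf_eq_log_sub_log β)]
  exact h

lemma hasDerivAt_cgfDeriv (β t : ℝ) : HasDerivAt (cgfDeriv β) (cgfDeriv2 β t) t := by
  have h := ((hasDerivAt_sinh t).const_mul 2).div (((hasDerivAt_cosh t).const_mul 2).const_add
    (exp β)) (exp_add_two_mul_cosh_pos β t).ne'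
  refine h.congr_deriv ?_
  rw [cgfDeriv2]
  congr 1
  linear_combination 4 * cosh_sq t

@[fun_prop]
lemma continuous_cgfDeriv (β : ℝ) : Continuous (cgfDeriv β) :=
  continuous_iff_continuousAt.2 fun t => (hasDerivAt_cgfDeriv β t).continuousAt

lemma cgfDeriv_zero (β : ℝ) : cgfDeriv β 0 = 0 := by simp [cgfDeriv]

lemma cgfDeriv2_zero (β : ℝ) : cgfDeriv2 β 0 = 2 / (exp β + 2) := by
  have : exp β + 2 ≠ 0 := by positivity
  rw [cgfDeriv2, cosh_zero]
  field_simp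
  ring

lemma cgfDeriv_lt_one (β t : ℝ) : cgfDeriv β t < 1 := by
  rw [cgfDeriv, div_lt_one (exp_add_two_mul_cosh_pos β t)]
  linarith [sinh_lt_cosh t, exp_pos β]

lemma cgfDeriv2_pos (β t : ℝ) : 0 < cgfDeriv2 β t := by
  have := cosh_pos t
  rw [cgfDeriv2]
  positivity

lemma strictMono_cgfDeriv (β : ℝ) : StrictMono (cgfDeriv β) :=
  strictMono_of_hasDerivAt_pos (hasDerivAt_cgfDeriv β) (cgfDeriv2_pos β)

lemma strictAntiOn_cgfDeriv2 {β : ℝ} (hβ : exp β ≤ 4) : StrictAntiOn (cgfDeriv2 β) (Ici 0) := by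
  intro s hs t ht hst
  have hu : 1 ≤ cosh s := one_le_cosh s
  have huv : cosh s < cosh t := cosh_strictMonoOn hs ht hst
  have hb : 0 < exp β := exp_pos β
  rw [cgfDeriv2, cgfDeriv2, div_lt_div_iff₀ (by positivity) (by positivity)]
  -- the cross-multiplied difference is `(cosh t - cosh s)` times `key`
  have key : 0 < 8 * exp β * cosh s * cosh t + 16 * exp β + 16 * (cosh s + cosh t)
      - 2 * exp β ^ 3 := by
    nlinarith [mul_le_mul hu (hu.trans huv.le) zero_le_one (by linarith),
      mul_le_mul hβ hβ hb.le (by norm_num)]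
  nlinarith [mul_pos (sub_pos.2 huv) key]

lemma strictConcaveOn_cgfDeriv {β : ℝ} (hβ : exp β ≤ 4) :
    StrictConcaveOn ℝ (Ici 0) (cgfDeriv β) := by
  refine StrictAntiOn.strictConcaveOn_of_deriv (convex_Ici 0)
    (continuous_cgfDeriv β).continuousOn ?_
  rw [interior_Ici, funext fun t => (hasDerivAt_cgfDeriv β t).deriv]
  exact (strictAntiOn_cgfDeriv2 hβ).mono Ioi_subset_Ici_self

lemma strictAntiOn_cgfDeriv_div {β : ℝ} (hβ : exp β ≤ 4) :
    StrictAntiOn (fun t => cgfDeriv β t / t) (Ioi 0) := by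
  intro s (hs : 0 < s) t (ht : 0 < t) hst
  simpa [cgfDeriv_zero] using (strictConcaveOn_cgfDeriv hβ).secant_strict_mono
    self_mem_Ici hs.le ht.le hs.ne' ht.ne' hst

lemma cgfDeriv_lt_mul {β t : ℝ} (hβ : exp β ≤ 4) (ht : 0 < t) :
    cgfDeriv β t < 2 / (exp β + 2) * t := by
  have := (strictConcaveOn_cgfDeriv hβ).slope_lt_of_hasDerivAt self_mem_Ici ht.le ht
    (hasDerivAt_cgfDeriv β 0)
  rwa [slope_def_field, cgfDeriv_zero, cgfDeriv2_zero, sub_zero, sub_zero, div_lt_iff₀ ht] at this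

lemma eventually_lt_cgfDeriv_div {β a : ℝ} (ha : a < 2 / (exp β + 2)) :
    ∀ᶠ t in 𝓝[>] 0, a < cgfDeriv β t / t := by
  have := (hasDerivAt_cgfDeriv β 0).tendsto_slope_zero_right
  simp only [zero_add, cgfDeriv_zero, sub_zero, smul_eq_mul, cgfDeriv2_zero] at this
  filter_upwards [this.eventually_const_lt ha] with t ht
  rwa [div_eq_inv_mul]

section FixedPoint

variable {β c x : ℝ}

lemma lt_cgfDeriv_mul_iff_inv_lt (hc : 0 < c) (hx : 0 < x) :
    x < cgfDeriv β (c * x) ↔ c⁻¹ < cgfDeriv β (c * x) / (c * x) := by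
  rw [lt_div_iff₀ (by positivity), inv_mul_cancel_left₀ hc.ne']

lemma cgfDeriv_mul_lt_iff_lt_inv (hc : 0 < c) (hx : 0 < x) :
    cgfDeriv β (c * x) < x ↔ cgfDeriv β (c * x) / (c * x) < c⁻¹ := by
  rw [div_lt_iff₀ (by positivity), inv_mul_cancel_left₀ hc.ne']

lemma inv_eq_cgfDeriv_div {m : ℝ} (hm : 0 < m) (hfix : cgfDeriv β (c * m) = m) :
    c⁻¹ = cgfDeriv β (c * m) / (c * m) := by
  rw [hfix, div_mul_cancel_right₀ hm.ne']

lemma lt_cgfDeriv_mul_iff {m : ℝ} (hβ : exp β ≤ 4) (hc : 0 < c) (hm : 0 < m)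
    (hfix : cgfDeriv β (c * m) = m) (hx : 0 < x) : x < cgfDeriv β (c * x) ↔ x < m := by
  rw [lt_cgfDeriv_mul_iff_inv_lt hc hx, inv_eq_cgfDeriv_div hm hfix,
    StrictAntiOn.lt_iff_gt (strictAntiOn_cgfDeriv_div hβ) (by positivity : 0 < c * m)
      (by positivity : 0 < c * x), mul_lt_mul_iff_right₀ hc]

lemma cgfDeriv_mul_lt_iff {m : ℝ} (hβ : exp β ≤ 4) (hc : 0 < c) (hm : 0 < m)
    (hfix : cgfDeriv β (c * m) = m) (hx : 0 < x) : cgfDeriv β (c * x) < x ↔ m < x := by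
  rw [cgfDeriv_mul_lt_iff_lt_inv hc hx, inv_eq_cgfDeriv_div hm hfix,
    StrictAntiOn.lt_iff_gt (strictAntiOn_cgfDeriv_div hβ) (by positivity : 0 < c * x)
      (by positivity : 0 < c * m), mul_lt_mul_iff_right₀ hc]

lemma exists_pos_cgfDeriv_mul_eq_self (hc : 1 < 2 / (exp β + 2) * c) :
    ∃ m, 0 < m ∧ cgfDeriv β (c * m) = m := by
  have hc0 : 0 < c := pos_of_mul_pos_right (one_pos.trans hc) (by positivity)
  have hinv : c⁻¹ < 2 / (exp β + 2) := by rwa [inv_lt_iff_one_lt_mul₀ hc0]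
  obtain ⟨t, hlt, ht : 0 < t⟩ := ((eventually_lt_cgfDeriv_div hinv).and self_mem_nhdsWithin).exists
  set x₀ := t / c
  have hx₀ : 0 < x₀ := by positivity
  have hcx₀ : c * x₀ = t := mul_div_cancel₀ t hc0.ne'
  have hbelow : x₀ < cgfDeriv β (c * x₀) := by
    rwa [lt_cgfDeriv_mul_iff_inv_lt hc0 hx₀, hcx₀]
  set x₁ := max 1 x₀
  have habove : cgfDeriv β (c * x₁) < x₁ := (cgfDeriv_lt_one β _).trans_le (le_max_left _ _)
  have hcont : ContinuousOn (fun x => cgfDeriv β (c * x) - x) (Icc x₀ x₁) := by fun_prop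
  obtain ⟨m, hm, hm0⟩ := intermediate_value_Icc' (le_max_right 1 x₀) hcont
    (show (0 : ℝ) ∈ Icc (cgfDeriv β (c * x₁) - x₁) (cgfDeriv β (c * x₀) - x₀) from
      ⟨by linarith, by linarith⟩)
  exact ⟨m, hx₀.trans_le hm.1, sub_eq_zero.1 hm0⟩

end FixedPoint

lemma cgf_neg (β t : ℝ) : cgf β (-t) = cgf β t := by
  rw [cgf_eq_log_sub_log, cgf_eq_log_sub_log, cosh_neg]

lemma freeEnergyG_neg (β K x : ℝ) : freeEnergyG β K (-x) = freeEnergyG β K x := by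
  rw [freeEnergyG, freeEnergyG, neg_sq, mul_neg, cgf_neg]

lemma hasDerivAt_freeEnergyG (β K x : ℝ) :
    HasDerivAt (freeEnergyG β K) (2 * β * K * (x - cgfDeriv β (2 * β * K * x))) x := by
  have h := ((hasDerivAt_pow 2 x).const_mul (β * K)).sub
    ((hasDerivAt_cgf β _).comp x ((hasDerivAt_id x).const_mul (2 * β * K)))
  refine h.congr_deriv ?_
  simp only [id, Nat.cast_ofNat]
  ring

lemma Kcurve_pos {β : ℝ} (hβ : 0 < β) : 0 < Kcurve β := by
  rw [Kcurve]
  positivity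

lemma Kcurve_lt_iff {β K : ℝ} (hβ : 0 < β) :
    Kcurve β < K ↔ 1 < 2 / (exp β + 2) * (2 * β * K) := by
  rw [Kcurve, div_lt_iff₀ (by positivity), show 2 / (exp β + 2) * (2 * β * K) =
    K * (4 * β) / (exp β + 2) by ring, one_lt_div (by positivity)]

/-- Since `G' x = 2βK (x - c'(2βKx))`, this says `G` decreases on `[0, m]` and increases on
`[m, ∞)`. -/
def IsMeanFieldCrossing (β K m : ℝ) : Prop :=
  (∀ x, 0 < x → x < m → x < cgfDeriv β (2 * β * K * x)) ∧
    ∀ x, m < x → cgfDeriv β (2 * β * K * x) < x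

lemma setOf_isMinimum_freeEnergyG {β K m : ℝ} (hβ : 0 < β) (hK : 0 < K)
    (h : IsMeanFieldCrossing β K m) :
    {x | ∀ y, freeEnergyG β K x ≤ freeEnergyG β K y} = {m, -m} :=
  setOf_forall_le_eq_pair_of_even (freeEnergyG_neg β K) fun _ hx hxm =>
    lt_of_hasDerivAt_neg_of_pos (hasDerivAt_freeEnergyG β K)
      (fun x hx hxm => mul_neg_of_pos_of_neg (by positivity) (sub_neg.2 (h.1 x hx hxm)))
      (fun x hxm => mul_pos (by positivity) (sub_pos.2 (h.2 x hxm))) hx hxm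

lemma isMeanFieldCrossing_zero {β K : ℝ} (hβ : 0 < β) (hβ4 : exp β ≤ 4) (hK : 0 < K)
    (hKc : K ≤ Kcurve β) : IsMeanFieldCrossing β K 0 := by
  refine ⟨fun x hx hx0 => absurd hx0 hx.not_gt, fun x hx => ?_⟩
  calc cgfDeriv β (2 * β * K * x) < 2 / (exp β + 2) * (2 * β * K * x) :=
        cgfDeriv_lt_mul hβ4 (by positivity)
    _ = 2 / (exp β + 2) * (2 * β * K) * x := by ring
    _ ≤ 1 * x := by
        gcongr
        exact not_lt.1 (mt (Kcurve_lt_iff hβ).2 hKc.not_gt)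
    _ = x := one_mul x

def IsMagnetization (β : ℝ) (m : ℝ → ℝ) : Prop :=
  ∀ K, Kcurve β < K → 0 < m K ∧ cgfDeriv β (2 * β * K * m K) = m K

lemma exists_isMagnetization {β : ℝ} (hβ : 0 < β) : ∃ m, IsMagnetization β m := by
  have : ∀ K, Kcurve β < K → ∃ x, 0 < x ∧ cgfDeriv β (2 * β * K * x) = x :=
    fun K hK => exists_pos_cgfDeriv_mul_eq_self ((Kcurve_lt_iff hβ).1 hK)
  choose! m hm using this
  exact ⟨m, hm⟩

namespace IsMagnetization

variable {β K x : ℝ} {m : ℝ → ℝ}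

lemma lt_cgfDeriv_iff (hm : IsMagnetization β m) (hβ : 0 < β) (hβ4 : exp β ≤ 4)
    (hK : Kcurve β < K) (hx : 0 < x) : x < cgfDeriv β (2 * β * K * x) ↔ x < m K :=
  have : 0 < K := (Kcurve_pos hβ).trans hK
  lt_cgfDeriv_mul_iff hβ4 (by positivity) (hm K hK).1 (hm K hK).2 hx

lemma cgfDeriv_lt_iff (hm : IsMagnetization β m) (hβ : 0 < β) (hβ4 : exp β ≤ 4)
    (hK : Kcurve β < K) (hx : 0 < x) : cgfDeriv β (2 * β * K * x) < x ↔ m K < x :=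
  have : 0 < K := (Kcurve_pos hβ).trans hK
  cgfDeriv_mul_lt_iff hβ4 (by positivity) (hm K hK).1 (hm K hK).2 hx

lemma isMeanFieldCrossing (hm : IsMagnetization β m) (hβ : 0 < β) (hβ4 : exp β ≤ 4)
    (hK : Kcurve β < K) : IsMeanFieldCrossing β K (m K) :=
  ⟨fun _ hx hxm => (hm.lt_cgfDeriv_iff hβ hβ4 hK hx).2 hxm,
    fun _ hxm => (hm.cgfDeriv_lt_iff hβ hβ4 hK ((hm K hK).1.trans hxm)).2 hxm⟩

lemma strictMonoOn (hm : IsMagnetization β m) (hβ : 0 < β) (hβ4 : exp β ≤ 4) :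
    StrictMonoOn m (Ioi (Kcurve β)) := by
  intro K₁ (hK₁ : Kcurve β < K₁) K₂ (hK₂ : Kcurve β < K₂) hlt
  obtain ⟨hpos, hfix⟩ := hm K₁ hK₁
  refine (hm.lt_cgfDeriv_iff hβ hβ4 hK₂ hpos).1 ?_
  calc m K₁ = cgfDeriv β (2 * β * K₁ * m K₁) := hfix.symm
    _ < cgfDeriv β (2 * β * K₂ * m K₁) := strictMono_cgfDeriv β (by gcongr)

lemma tendsto_nhdsWithin {K₀ l : ℝ} (hm : IsMagnetization β m) (hβ : 0 < β)
    (hβ4 : exp β ≤ 4) (hl : 0 ≤ l) (h : IsMeanFieldCrossing β K₀ l) :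
    Tendsto m (𝓝[Ioi (Kcurve β)] K₀) (𝓝 l) := by
  have hcont : ∀ x, Continuous fun K => cgfDeriv β (2 * β * K * x) := fun x => by fun_prop
  have hIoi : ∀ᶠ K in 𝓝[Ioi (Kcurve β)] K₀, Kcurve β < K := self_mem_nhdsWithin
  refine tendsto_order.2 ⟨fun a ha => ?_, fun b hb => ?_⟩
  · rcases le_or_gt a 0 with ha0 | ha0
    · filter_upwards [hIoi] with K hK using ha0.trans_lt (hm K hK).1
    · have hev := continuousAt_const.eventually_lt (hcont a).continuousAt (h.1 a ha0 ha)
      filter_upwards [hIoi, nhdsWithin_le_nhds hev] with K hK hKa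
      exact (hm.lt_cgfDeriv_iff hβ hβ4 hK ha0).1 hKa
  · have hev := (hcont b).continuousAt.eventually_lt continuousAt_const (h.2 b hb)
    filter_upwards [hIoi, nhdsWithin_le_nhds hev] with K hK hKb
    exact (hm.cgfDeriv_lt_iff hβ hβ4 hK (hl.trans_lt hb)).1 hKb

lemma continuousOn (hm : IsMagnetization β m) (hβ : 0 < β) (hβ4 : exp β ≤ 4) :
    ContinuousOn m (Ioi (Kcurve β)) := fun _ hK =>
  hm.tendsto_nhdsWithin hβ hβ4 (hm _ hK).1.le (hm.isMeanFieldCrossing hβ hβ4 hK)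

end IsMagnetization

end BlumeCapel

open BlumeCapel

/-- the continuous bifurcation of the set of global minimum points
of `G_{β,K}` at `K = K(β)` for `0 < β ≤ β_c` (second-order phase transition). -/
theorem stmt12 (β : ℝ) (hβ0 : 0 < β) (hβ : β ≤ Real.log 4) :
    (∀ K : ℝ, 0 < K → K ≤ Kcurve β →
      {x : ℝ | ∀ y : ℝ, freeEnergyG β K x ≤ freeEnergyG β K y} = {0}) ∧
    ∃ m : ℝ → ℝ,
      (∀ K : ℝ, Kcurve β < K →
        0 < m K ∧
          {x : ℝ | ∀ y : ℝ, freeEnergyG β K x ≤ freeEnergyG β K y} = {m K, -(m K)}) ∧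
      StrictMonoOn m (Set.Ioi (Kcurve β)) ∧
      ContinuousOn m (Set.Ioi (Kcurve β)) ∧
      Tendsto m (nhdsWithin (Kcurve β) (Set.Ioi (Kcurve β))) (nhds 0) := by
  have hβ4 : exp β ≤ 4 := (exp_le_exp.2 hβ).trans_eq (exp_log (by norm_num))
  obtain ⟨m, hm⟩ := exists_isMagnetization hβ0
  refine ⟨fun K hK hKc => ?_, m, fun K hK => ⟨(hm K hK).1, ?_⟩, hm.strictMonoOn hβ0 hβ4,
    hm.continuousOn hβ0 hβ4, ?_⟩
  · simpa using setOf_isMinimum_freeEnergyG hβ0 hK (isMeanFieldCrossing_zero hβ0 hβ4 hK hKc)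
  · exact setOf_isMinimum_freeEnergyG hβ0 ((Kcurve_pos hβ0).trans hK)
      (hm.isMeanFieldCrossing hβ0 hβ4 hK)
  · exact hm.tendsto_nhdsWithin hβ0 hβ4 le_rfl
      (isMeanFieldCrossing_zero hβ0 hβ4 (Kcurve_pos hβ0) le_rfl)
end

section
/- Let β satisfy 0 < β ≤ β_c = log 4, and let (β_n, K_n) be a sequence of pairs of positive real numbers converging to (β, K(β)). Fix γ > 0 and v ∈ ℝ, and let g : ℝ → ℝ be an even polynomial function of degree 4 or 6 with g(0) = 0 and g(x) → ∞ as |x| → ∞, whose set of global minimum points over ℝ is either {x̄, −x̄} or {0, x̄, −x̄} for some x̄ > 0. Assume: (i) n^v·G_{β_n,K_n}(x/n^γ) → g(x) as n → ∞, uniformly for x in every compact subset of ℝ; (ii) there exist a polynomial H with H(x) → ∞ as |x| → ∞ and R > 0 such that for all sufficiently large n and all x ∈ ℝ with |x| < R·n^γ one has n^v·G_{β_n,K_n}(x/n^γ) ≥ H(x); (iii) for all sufficiently large n there exists m_n > 0 that is both a global minimum point of G_{β_n,K_n} over ℝ and the largest real zero of the derivative G'_{β_n,K_n}; and (iv) m_n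 → 0 as n → ∞. Then n^γ·m_n → x̄ as n → ∞; i.e., m_n ∼ x̄/n^γ. -/
open Real Filter

/-!
Write `y n = n ^ γ * m n`; it is a global minimum point of the rescaled functional
`F n x = n ^ v * G n (x / n ^ γ)`, and `F n → g` uniformly on compact sets. The lower bound `H`
(with `m n → 0`) keeps `y n` bounded above by some `M`. On `[b, M]` with `b > x̄` the continuous
function `g` stays strictly above `g x̄`, so by uniform convergence `F n x̄ < F n x` for all
`x ∈ [b, M]`, and the minimum point `y n` must lie below `b`. Conversely, for `0 < a < x̄ < b`,
eventually `F n x̄ < F n a` and `F n x̄ < F n b`, so `G n` has an interior local minimum, hence a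
critical point, in `(a / n ^ γ, b / n ^ γ)`; since `m n` is the largest critical point, `y n > a`.
-/

open Set Topology

theorem continuous_cgf (β : ℝ) : Continuous (cgf β) :=
  Continuous.log (by fun_prop) fun t => by positivity

theorem continuous_freeEnergyG (β K : ℝ) : Continuous (freeEnergyG β K) :=
  (continuous_const.mul (continuous_pow 2)).sub
    ((continuous_cgf β).comp (continuous_const.mul continuous_id))

theorem apply_lt_of_setOf_isMin_eq {g : ℝ → ℝ} {xbar : ℝ} (hxbar : 0 < xbar)
    (hminset :
      {x : ℝ | ∀ y : ℝ, g x ≤ g y} = {xbar, -xbar} ∨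
      {x : ℝ | ∀ y : ℝ, g x ≤ g y} = {0, xbar, -xbar})
    {z : ℝ} (hz : 0 < z) (hzx : z ≠ xbar) : g xbar < g z := by
  have hxbar_min : ∀ y, g xbar ≤ g y := by
    rcases hminset with h | h <;> exact (h ▸ by simp : xbar ∈ {x : ℝ | ∀ y, g x ≤ g y})
  obtain ⟨y, hy⟩ : ∃ y, g y < g z := by
    have hzneg : z ≠ -xbar := by linarith
    have hz_not_min : z ∉ {x : ℝ | ∀ y, g x ≤ g y} := by
      rcases hminset with h | h <;> simp [h, hz.ne', hzx, hzneg]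
    simpa using hz_not_min
  exact (hxbar_min y).trans_lt hy

theorem TendstoUniformlyOn.eventually_forall_lt_of_forall_lt {α ι : Type*} [TopologicalSpace α]
    {l : Filter ι} {F : ι → α → ℝ} {g : α → ℝ} {S : Set α} {c : α}
    (hF : TendstoUniformlyOn F g l (insert c S)) (hS : IsCompact S) (hg : ContinuousOn g S)
    (hc : ∀ x ∈ S, g c < g x) : ∀ᶠ i in l, ∀ x ∈ S, F i c < F i x := by
  rcases S.eq_empty_or_nonempty with rfl | hne
  · simp
  obtain ⟨p, hp, hpmin⟩ := hS.exists_isMinOn hne hg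
  have hδ : 0 < g p - g c := sub_pos.2 (hc p hp)
  filter_upwards [Metric.tendstoUniformlyOn_iff.mp hF _ (half_pos hδ)] with i hi x hx
  have hic := hi c (mem_insert c S)
  have hix := hi x (mem_insert_of_mem c hx)
  have hpx : g p ≤ g x := hpmin hx
  rw [Real.dist_eq, abs_lt] at hic hix
  linarith [hic.1, hix.2]

theorem bddAbove_setOf_le_of_tendsto_cocompact {α : Type*} [TopologicalSpace α] [LinearOrder α]
    [ClosedIciTopology α] [Nonempty α] {H : α → ℝ} (hH : Tendsto H (cocompact α) atTop)
    (C : ℝ) : BddAbove {x | H x ≤ C} := by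
  obtain ⟨K, hK, hHK⟩ :=
    hasBasis_cocompact.eventually_iff.mp (hH.eventually (eventually_gt_atTop C))
  exact hK.bddAbove.mono fun x hx => by_contra fun hxK => (hHK hxK).not_ge hx

theorem exists_deriv_eq_zero_mem_Ioo_of_lt_of_lt {f : ℝ → ℝ} {a b c : ℝ}
    (hf : ContinuousOn f (Icc a b)) (hc : c ∈ Icc a b) (hca : f c < f a) (hcb : f c < f b) :
    ∃ z ∈ Ioo a b, deriv f z = 0 := by
  have hab : a ≤ b := hc.1.trans hc.2
  obtain ⟨z, hz, hzmin⟩ := isCompact_Icc.exists_isLocalMin_mem_open Ioo_subset_Icc_self hf hc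
    (by rw [Icc_sdiff_Ioo_same hab]; rintro z (rfl | rfl) <;> assumption) isOpen_Ioo
  exact ⟨z, hz, hzmin.deriv_eq_zero⟩

section RescaledMinimizers

variable {G : ℕ → ℝ → ℝ} {w s m : ℕ → ℝ} {g : ℝ → ℝ}

theorem continuous_of_tendstoUniformlyOn_rescaled (hG : ∀ n, Continuous (G n))
    (hunif : ∀ C : Set ℝ, IsCompact C →
      TendstoUniformlyOn (fun n x => w n * G n (x / s n)) g atTop C) :
    Continuous g :=
  (tendstoLocallyUniformly_iff_forall_isCompact.mpr hunif).continuous <|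
    Frequently.of_forall fun n => continuous_const.mul ((hG n).comp (continuous_id.div_const _))

theorem eventually_rescaled_minimizer_le (hw : ∀ᶠ n in atTop, 0 < w n)
    (hmin : ∀ᶠ n in atTop, ∀ y, G n (m n) ≤ G n y) :
    ∀ᶠ n in atTop, ∀ x, w n * G n (m n) ≤ w n * G n (x / s n) := by
  filter_upwards [hw, hmin] with n hwn hmn x
  exact mul_le_mul_of_nonneg_left (hmn _) hwn.le

theorem exists_eventually_rescaled_minimizer_le
    (hunif : ∀ C : Set ℝ, IsCompact C →
      TendstoUniformlyOn (fun n x => w n * G n (x / s n)) g atTop C)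
    (hw : ∀ᶠ n in atTop, 0 < w n) (hs : ∀ᶠ n in atTop, 0 < s n)
    (hmin : ∀ᶠ n in atTop, ∀ y, G n (m n) ≤ G n y)
    {H : ℝ → ℝ} (hH : Tendsto H (cocompact ℝ) atTop) {R : ℝ} (hR : 0 < R)
    (hlower : ∀ᶠ n in atTop, ∀ x, |x| < R * s n → H x ≤ w n * G n (x / s n))
    (hm0 : Tendsto m atTop (𝓝 0)) :
    ∃ M, ∀ᶠ n in atTop, s n * m n ≤ M := by
  have hF0 : ∀ᶠ n in atTop, w n * G n (0 / s n) < g 0 + 1 :=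
    ((hunif {0} isCompact_singleton).tendsto_at rfl).eventually (gt_mem_nhds (lt_add_one _))
  obtain ⟨M, hM⟩ := bddAbove_setOf_le_of_tendsto_cocompact hH (g 0 + 1)
  refine ⟨M, ?_⟩
  filter_upwards [hF0, hlower, hs, eventually_rescaled_minimizer_le (s := s) hw hmin,
    Metric.tendsto_nhds.mp hm0 R hR] with n hF0n hlown hsn hminn hmn
  rw [Real.dist_0_eq_abs] at hmn
  have hHy := hlown (s n * m n) (by rw [abs_mul, abs_of_pos hsn, mul_comm]; gcongr)
  rw [mul_div_cancel_left₀ _ hsn.ne'] at hHy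
  exact hM (show H (s n * m n) ≤ g 0 + 1 by linarith [hminn 0])

theorem eventually_lt_rescaled_of_isGreatest_deriv_eq_zero (hG : ∀ n, Continuous (G n))
    (hunif : ∀ C : Set ℝ, IsCompact C →
      TendstoUniformlyOn (fun n x => w n * G n (x / s n)) g atTop C)
    (hw : ∀ᶠ n in atTop, 0 < w n) (hs : ∀ᶠ n in atTop, 0 < s n)
    (hcrit : ∀ᶠ n in atTop, IsGreatest {x | deriv (G n) x = 0} (m n))
    {a b c : ℝ} (hac : a ≤ c) (hcb : c ≤ b) (hga : g c < g a) (hgb : g c < g b) :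
    ∀ᶠ n in atTop, a < s n * m n := by
  have hg := continuous_of_tendstoUniformlyOn_rescaled hG hunif
  have hab : ∀ x ∈ ({a, b} : Set ℝ), g c < g x := by rintro x (rfl | rfl) <;> assumption
  have hS : IsCompact ({a, b} : Set ℝ) := isCompact_singleton.insert a
  filter_upwards [(hunif _ (hS.insert c)).eventually_forall_lt_of_forall_lt hS hg.continuousOn hab,
    hw, hs, hcrit] with n hn hwn hsn hcritn
  obtain ⟨z, hz, hz0⟩ := exists_deriv_eq_zero_mem_Ioo_of_lt_of_lt (hG n).continuousOn
    ⟨div_le_div_of_nonneg_right hac hsn.le, div_le_div_of_nonneg_right hcb hsn.le⟩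
    (lt_of_mul_lt_mul_left (hn a (by simp)) hwn.le) (lt_of_mul_lt_mul_left (hn b (by simp)) hwn.le)
  exact (div_lt_iff₀' hsn).mp (hz.1.trans_le (hcritn.2 hz0))

theorem eventually_rescaled_lt_of_bddAbove (hG : ∀ n, Continuous (G n))
    (hunif : ∀ C : Set ℝ, IsCompact C →
      TendstoUniformlyOn (fun n x => w n * G n (x / s n)) g atTop C)
    (hw : ∀ᶠ n in atTop, 0 < w n) (hs : ∀ᶠ n in atTop, 0 < s n)
    (hmin : ∀ᶠ n in atTop, ∀ y, G n (m n) ≤ G n y)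
    {b c M : ℝ} (hM : ∀ᶠ n in atTop, s n * m n ≤ M) (hc : ∀ x ∈ Icc b M, g c < g x) :
    ∀ᶠ n in atTop, s n * m n < b := by
  have hg := continuous_of_tendstoUniformlyOn_rescaled hG hunif
  filter_upwards [(hunif _ (isCompact_Icc.insert c)).eventually_forall_lt_of_forall_lt
    isCompact_Icc hg.continuousOn hc, hM, hs, eventually_rescaled_minimizer_le (s := s) hw hmin]
    with n hn hMn hsn hminn
  by_contra! hb
  have hlt := hn _ ⟨hb, hMn⟩
  rw [mul_div_cancel_left₀ _ hsn.ne'] at hlt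
  exact (hlt.trans_le (hminn c)).false

theorem tendsto_rescaled_minimizer (hG : ∀ n, Continuous (G n))
    (hunif : ∀ C : Set ℝ, IsCompact C →
      TendstoUniformlyOn (fun n x => w n * G n (x / s n)) g atTop C)
    (hw : ∀ᶠ n in atTop, 0 < w n) (hs : ∀ᶠ n in atTop, 0 < s n)
    (hmin : ∀ᶠ n in atTop, ∀ y, G n (m n) ≤ G n y)
    (hcrit : ∀ᶠ n in atTop, IsGreatest {x | deriv (G n) x = 0} (m n))
    (hbdd : ∃ M, ∀ᶠ n in atTop, s n * m n ≤ M)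
    {xbar : ℝ} (hxbar : 0 < xbar) (hgx : ∀ z, 0 < z → z ≠ xbar → g xbar < g z) :
    Tendsto (fun n => s n * m n) atTop (𝓝 xbar) := by
  refine tendsto_order.2 ⟨fun a ha => ?_, fun b hb => ?_⟩
  · have ha' : 0 < max a (xbar / 2) := lt_max_of_lt_right (half_pos hxbar)
    have hax : max a (xbar / 2) < xbar := max_lt ha (half_lt_self hxbar)
    filter_upwards [eventually_lt_rescaled_of_isGreatest_deriv_eq_zero hG hunif hw hs hcrit
      hax.le (le_add_of_nonneg_right zero_le_one) (hgx _ ha' hax.ne)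
      (hgx _ (by linarith) (by linarith))] with n hn
    exact (le_max_left _ _).trans_lt hn
  · obtain ⟨M, hM⟩ := hbdd
    exact eventually_rescaled_lt_of_bddAbove hG hunif hw hs hmin hM
      fun x hx => hgx x (by linarith [hx.1]) (by linarith [hx.1])

end RescaledMinimizers

theorem stmt14_general
    (βn Kn : ℕ → ℝ)
    (γ v : ℝ)
    (g : ℝ → ℝ)
    (xbar : ℝ) (hxbar : 0 < xbar)
    (hminset :
      {x : ℝ | ∀ y : ℝ, g x ≤ g y} = {xbar, -xbar} ∨
      {x : ℝ | ∀ y : ℝ, g x ≤ g y} = {0, xbar, -xbar})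
    (hunif : ∀ C : Set ℝ, IsCompact C →
      TendstoUniformlyOn
        (fun (n : ℕ) (x : ℝ) =>
          (n : ℝ) ^ v * freeEnergyG (βn n) (Kn n) (x / (n : ℝ) ^ γ))
        g atTop C)
    (H : ℝ → ℝ)
    (hHinf : Tendsto H (cocompact ℝ) atTop)
    (R : ℝ) (hR : 0 < R)
    (hlower : ∀ᶠ n : ℕ in atTop, ∀ x : ℝ, |x| < R * (n : ℝ) ^ γ →
      H x ≤ (n : ℝ) ^ v * freeEnergyG (βn n) (Kn n) (x / (n : ℝ) ^ γ))
    (m : ℕ → ℝ)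
    (hm : ∀ᶠ n : ℕ in atTop,
      0 < m n ∧
      (∀ y : ℝ, freeEnergyG (βn n) (Kn n) (m n) ≤ freeEnergyG (βn n) (Kn n) y) ∧
      IsGreatest {x : ℝ | deriv (freeEnergyG (βn n) (Kn n)) x = 0} (m n))
    (hm0 : Tendsto m atTop (nhds 0)) :
    Tendsto (fun n : ℕ => (n : ℝ) ^ γ * m n) atTop (nhds xbar) := by
  have hG (n : ℕ) := continuous_freeEnergyG (βn n) (Kn n)
  have hpow (r : ℝ) : ∀ᶠ n : ℕ in atTop, 0 < (n : ℝ) ^ r :=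
    (eventually_gt_atTop 0).mono fun n hn => rpow_pos_of_pos (Nat.cast_pos.2 hn) r
  have hmin := hm.mono fun n hn => hn.2.1
  exact tendsto_rescaled_minimizer hG hunif (hpow v) (hpow γ) hmin (hm.mono fun n hn => hn.2.2)
    (exists_eventually_rescaled_minimizer_le hunif (hpow v) (hpow γ) hmin hHinf hR hlower hm0)
    hxbar fun z hz hzx => apply_lt_of_setOf_isMin_eq hxbar hminset hz hzx

/-- the main asymptotic theorem. Under uniform convergence of the
scaled free-energy functionals to a Ginzburg--Landau polynomial `g` with unique
positive global minimum point `x̄`, a lower polynomial bound, and the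
characterization of `m_n` as positive global minimum point and largest critical
point, one has `n^γ · m_n → x̄`. -/
theorem stmt14 (β : ℝ) (hβ0 : 0 < β) (hβ : β ≤ Real.log 4)
    (βn Kn : ℕ → ℝ) (hpos : ∀ n : ℕ, 0 < βn n ∧ 0 < Kn n)
    (hβn : Tendsto βn atTop (nhds β)) (hKn : Tendsto Kn atTop (nhds (Kcurve β)))
    (γ v : ℝ) (hγ : 0 < γ)
    (g : ℝ → ℝ) (P : Polynomial ℝ) (hgP : ∀ x : ℝ, g x = P.eval x)
    (hdeg : P.natDegree = 4 ∨ P.natDegree = 6)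
    (heven : ∀ x : ℝ, g (-x) = g x) (hg0 : g 0 = 0)
    (hginf : Tendsto g (cocompact ℝ) atTop)
    (xbar : ℝ) (hxbar : 0 < xbar)
    (hminset :
      {x : ℝ | ∀ y : ℝ, g x ≤ g y} = {xbar, -xbar} ∨
      {x : ℝ | ∀ y : ℝ, g x ≤ g y} = {0, xbar, -xbar})
    (hunif : ∀ C : Set ℝ, IsCompact C →
      TendstoUniformlyOn
        (fun (n : ℕ) (x : ℝ) =>
          (n : ℝ) ^ v * freeEnergyG (βn n) (Kn n) (x / (n : ℝ) ^ γ))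
        g atTop C)
    (H : ℝ → ℝ) (Q : Polynomial ℝ) (hHQ : ∀ x : ℝ, H x = Q.eval x)
    (hHinf : Tendsto H (cocompact ℝ) atTop)
    (R : ℝ) (hR : 0 < R)
    (hlower : ∀ᶠ n : ℕ in atTop, ∀ x : ℝ, |x| < R * (n : ℝ) ^ γ →
      H x ≤ (n : ℝ) ^ v * freeEnergyG (βn n) (Kn n) (x / (n : ℝ) ^ γ))
    (m : ℕ → ℝ)
    (hm : ∀ᶠ n : ℕ in atTop,
      0 < m n ∧
      (∀ y : ℝ, freeEnergyG (βn n) (Kn n) (m n) ≤ freeEnergyG (βn n) (Kn n) y) ∧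
      IsGreatest {x : ℝ | deriv (freeEnergyG (βn n) (Kn n)) x = 0} (m n))
    (hm0 : Tendsto m atTop (nhds 0)) :
    Tendsto (fun n : ℕ => (n : ℝ) ^ γ * m n) atTop (nhds xbar) :=
  stmt14_general βn Kn γ v g xbar hxbar hminset hunif H hHinf R hR hlower m hm hm0
end
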